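/- arXiv:2204.09963 — 4 statements merged into one kernel-verified Lean document; each statement's English description precedes it below -/
import Mathlib

section
/- Let e = (e_1, ..., e_d) be an orthonormal basis of ℂ^d. Each rank-one projector |e_i ⊗ conj(e_i)⟩⟨e_i ⊗ conj(e_i)| satisfies ⟨e_i ⊗ conj(e_i)| ω |e_i ⊗ conj(e_i)⟩ = 1/d, where ω is the maximally entangled state. Consequently Z_e ≥ ω in the positive semidefinite (Loewner) order. -/
open Matrix BigOperators ComplexOrder

noncomputable section

/-- The matrix `Z_e = ∑ i |e_i ⊗ conj(e_i)⟩⟨e_i ⊗ conj(e_i)|` on `ℂ^d ⊗ ℂ^d`. -/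
def ZMat {d : ℕ} (e : Fin d → Fin d → ℂ) :
    Matrix (Fin d × Fin d) (Fin d × Fin d) ℂ :=
  Matrix.of fun p q =>
    ∑ i, (e i p.1 * star (e i p.2)) * star (e i q.1 * star (e i q.2))

/-- The maximally entangled state `ω = (1/d) ∑ ij |ii⟩⟨jj|`. -/
def omegaMat (d : ℕ) : Matrix (Fin d × Fin d) (Fin d × Fin d) ℂ :=
  Matrix.of fun p q =>
    (if p.1 = p.2 then 1 else 0) * (if q.1 = q.2 then 1 else 0) / (d : ℂ)

/-- `e` is an orthonormal family (hence basis) of `ℂ^d`. -/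
def OrthonormalBasis' {d : ℕ} (e : Fin d → Fin d → ℂ) : Prop :=
  ∀ i j, (∑ k, star (e i k) * e j k) = if i = j then 1 else 0

/-- Column orthonormality follows from row orthonormality. -/
lemma col_orth {d : ℕ} (e : Fin d → Fin d → ℂ) (he : OrthonormalBasis' e) (k l : Fin d) :
    (∑ i, star (e i k) * e i l) = if k = l then 1 else 0 := by
  have hU : (Matrix.of e) * (Matrix.of e)ᴴ = 1 := by
    ext i j
    simp only [Matrix.mul_apply, Matrix.conjTranspose_apply, Matrix.of_apply, Matrix.one_apply]
    have h1 : ∑ m, e i m * star (e j m) = star (∑ m, star (e i m) * e j m) := by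
      rw [star_sum]
      exact Finset.sum_congr rfl fun m _ => by rw [star_mul', star_star]
    rw [h1, he i j]
    split <;> simp
  have hU' : (Matrix.of e)ᴴ * (Matrix.of e) = 1 := mul_eq_one_comm.mp hU
  have h := congrFun (congrFun hU' k) l
  simpa [Matrix.mul_apply, Matrix.conjTranspose_apply, Matrix.one_apply] using h

theorem Z_ge_omega {d : ℕ} (hd : 0 < d) (e : Fin d → Fin d → ℂ)
    (he : OrthonormalBasis' e) :
    (∀ i : Fin d,
      (∑ p : Fin d × Fin d, ∑ q : Fin d × Fin d,
        star (e i p.1 * star (e i p.2)) * omegaMat d p q * (e i q.1 * star (e i q.2)))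
        = 1 / (d : ℂ)) ∧
    (ZMat e - omegaMat d).PosSemidef := by
  have hdC : (d : ℂ) ≠ 0 := Nat.cast_ne_zero.mpr hd.ne'
  constructor
  · intro i
    have hsplit : ∀ p q : Fin d × Fin d,
        star (e i p.1 * star (e i p.2)) * omegaMat d p q * (e i q.1 * star (e i q.2))
        = ((star (e i p.1) * e i p.2) * (if p.1 = p.2 then 1 else 0))
          * (((if q.1 = q.2 then 1 else 0)) * (e i q.1 * star (e i q.2))) / d := by
      intro p q
      simp only [omegaMat, Matrix.of_apply, star_mul', star_star]
      ring
    calc (∑ p : Fin d × Fin d, ∑ q : Fin d × Fin d,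
        star (e i p.1 * star (e i p.2)) * omegaMat d p q * (e i q.1 * star (e i q.2)))
        = (∑ p : Fin d × Fin d, (star (e i p.1) * e i p.2) * (if p.1 = p.2 then 1 else 0))
          * (∑ q : Fin d × Fin d, (if q.1 = q.2 then 1 else 0) * (e i q.1 * star (e i q.2))) / d := by
          rw [Finset.sum_mul_sum, Finset.sum_div]
          refine Finset.sum_congr rfl fun p _ => ?_
          rw [Finset.sum_div]
          exact Finset.sum_congr rfl fun q _ => hsplit p q
      _ = 1 / (d : ℂ) := by
          have h1 : (∑ p : Fin d × Fin d, (star (e i p.1) * e i p.2) * (if p.1 = p.2 then 1 else 0)) = 1 := by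
            rw [Fintype.sum_prod_type]
            simp only [mul_ite, mul_one, mul_zero, Finset.sum_ite_eq, Finset.mem_univ, if_true]
            simpa using he i i
          have h2 : (∑ q : Fin d × Fin d, (if q.1 = q.2 then 1 else 0) * (e i q.1 * star (e i q.2))) = 1 := by
            rw [Fintype.sum_prod_type]
            simp only [ite_mul, one_mul, zero_mul, Finset.sum_ite_eq, Finset.mem_univ, if_true]
            have h2' : ∑ k, e i k * star (e i k) = star (∑ k, star (e i k) * e i k) := by
              rw [star_sum]
              exact Finset.sum_congr rfl fun m _ => by rw [star_mul', star_star]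
            rw [h2', he i i]; simp
          rw [h1, h2, one_mul]
  · set B : Matrix (Fin d) (Fin d × Fin d) ℂ :=
      Matrix.of (fun i p => (star (e i p.1) * e i p.2) - (if p.1 = p.2 then 1 else 0) / d) with hB
    have key : ZMat e - omegaMat d = Bᴴ * B := by
      ext p q
      have hcolp : (∑ i, e i p.1 * star (e i p.2)) = if p.1 = p.2 then 1 else 0 := by
        have h1 : (∑ i, e i p.1 * star (e i p.2)) = star (∑ i, star (e i p.1) * e i p.2) := by
          rw [star_sum]
          exact Finset.sum_congr rfl fun m _ => by rw [star_mul', star_star]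
        rw [h1, col_orth e he p.1 p.2]
        split <;> simp
      have hcolq : (∑ i, star (e i q.1) * e i q.2) = if q.1 = q.2 then 1 else 0 :=
        col_orth e he q.1 q.2
      have hterm : ∀ i, star (B i p) * B i q
          = (e i p.1 * star (e i p.2)) * (star (e i q.1) * e i q.2)
            - ((if q.1 = q.2 then 1 else 0) / d) * (e i p.1 * star (e i p.2))
            - ((if p.1 = p.2 then 1 else 0) / d) * (star (e i q.1) * e i q.2)
            + ((if p.1 = p.2 then 1 else 0) / d) * ((if q.1 = q.2 then 1 else 0) / d) := by
        intro i
        simp only [hB, Matrix.of_apply, star_sub, star_mul', star_star, star_div₀,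
          apply_ite (star : ℂ → ℂ), star_one, star_zero, star_natCast]
        ring
      have expand : (Bᴴ * B) p q
          = (∑ i, (e i p.1 * star (e i p.2)) * (star (e i q.1) * e i q.2))
            - ((if q.1 = q.2 then 1 else 0) / d) * (∑ i, e i p.1 * star (e i p.2))
            - ((if p.1 = p.2 then 1 else 0) / d) * (∑ i, star (e i q.1) * e i q.2)
            + (d : ℂ) * (((if p.1 = p.2 then 1 else 0) / d) * ((if q.1 = q.2 then 1 else 0) / d)) := by
        simp only [Matrix.mul_apply, Matrix.conjTranspose_apply]
        rw [Finset.sum_congr rfl fun i _ => hterm i]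
        rw [Finset.sum_add_distrib, Finset.sum_sub_distrib, Finset.sum_sub_distrib,
          ← Finset.mul_sum, ← Finset.mul_sum, Finset.sum_const, Finset.card_univ,
          Fintype.card_fin, nsmul_eq_mul]
      have hz : (ZMat e) p q = ∑ i, (e i p.1 * star (e i p.2)) * (star (e i q.1) * e i q.2) := by
        simp only [ZMat, Matrix.of_apply, star_mul', star_star]
      rw [Matrix.sub_apply, expand, hcolp, hcolq, hz]
      simp only [omegaMat, Matrix.of_apply]
      set a : ℂ := if p.1 = p.2 then 1 else 0 with ha
      set b : ℂ := if q.1 = q.2 then 1 else 0 with hb2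
      field_simp
      ring
    rw [key]
    exact Matrix.posSemidef_conjTranspose_mul_self B
end
end

section
/- Let Φ_1, ..., Φ_N : M_d(ℂ) → M_d(ℂ) be compatible quantum channels, i.e., there exists a channel Λ : M_d(ℂ) → M_d(ℂ)^{⊗N} whose s-th marginal is Φ_s for each s. Then for any orthonormal bases e^{(1)}, ..., e^{(N)} of ℂ^d, the POVMs A_s := (Φ_s*(|e^{(s)}_i⟩⟨e^{(s)}_i|))_{i=1}^d are compatible (jointly measurable): there exists a POVM B = (B_{i_1...i_N}) with d^N outcomes whose s-th marginal is A_s. -/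
open Matrix BigOperators ComplexOrder

noncomputable section

abbrev Mat (d : ℕ) := Matrix (Fin d) (Fin d) ℂ

/-- The Choi matrix of a linear map between matrix algebras. -/
def choiMat' {n m : Type*} [Fintype n] [Fintype m] [DecidableEq n]
    (Φ : Matrix n n ℂ →ₗ[ℂ] Matrix m m ℂ) : Matrix (n × m) (n × m) ℂ :=
  Matrix.of fun p q => Φ (Matrix.single p.1 q.1 1) p.2 q.2

/-- A quantum channel: completely positive (PSD Choi matrix) and trace preserving. -/
def IsCPTP' {n m : Type*} [Fintype n] [Fintype m] [DecidableEq n]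
    (Φ : Matrix n n ℂ →ₗ[ℂ] Matrix m m ℂ) : Prop :=
  (choiMat' Φ).PosSemidef ∧ ∀ X, (Φ X).trace = X.trace

/-- The Hilbert–Schmidt adjoint of `Φ` applied to `A`. -/
def adjMap {d : ℕ} (Φ : Mat d →ₗ[ℂ] Mat d) (A : Mat d) : Mat d :=
  Matrix.of fun i j => ((Φ (Matrix.single i j 1))ᴴ * A).trace

/-- Rank-one projector `|v⟩⟨v|`. -/
def outer {d : ℕ} (v : Fin d → ℂ) : Mat d :=
  Matrix.of fun i j => v i * star (v j)

/-- Insert the value `a` in position `s`, the remaining coordinates given by `h`. -/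
def insertAt {N d : ℕ} (s : Fin N) (a : Fin d) (h : {t : Fin N // t ≠ s} → Fin d) :
    Fin N → Fin d :=
  fun t => if ht : t = s then a else h ⟨t, ht⟩

/-- The `s`-th marginal (partial trace over all tensor factors except the `s`-th)
of a matrix on `(ℂ^d)^{⊗N}`. -/
def marginal {N d : ℕ} (s : Fin N)
    (M : Matrix (Fin N → Fin d) (Fin N → Fin d) ℂ) : Mat d :=
  Matrix.of fun a b => ∑ h : {t : Fin N // t ≠ s} → Fin d,
    M (insertAt s a h) (insertAt s b h)

/-- Compatibility of an `N`-tuple of channels on `M_d(ℂ)`: existence of a joint channel. -/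
def Compatible {N d : ℕ} (Ψ : Fin N → (Mat d →ₗ[ℂ] Mat d)) : Prop :=
  ∃ Λ : Mat d →ₗ[ℂ] Matrix (Fin N → Fin d) (Fin N → Fin d) ℂ,
    IsCPTP' Λ ∧ ∀ s X, marginal s (Λ X) = Ψ s X

/-!
Take `B g := Λ* |v_g⟩⟨v_g|` for the product basis `v_g = ⊗ₜ e⁽ᵗ⁾_{g t}`. The adjoint `Λ*` is
positive because `Λ` is completely positive (on a rank-one projector it is a compression of the
Choi matrix) and unital because `Λ` is trace preserving. The projectors `|v_g⟩⟨v_g|` sum to `1`,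
and those with `g s = i` sum to `|e⁽ˢ⁾ᵢ⟩⟨e⁽ˢ⁾ᵢ| ⊗ 1`, on which `Λ*` acts as `Φ_s*` because
tensoring with the identity is dual to the partial trace.
-/

section HilbertSchmidtAdjoint

variable {n m : Type*} [Fintype m] [DecidableEq n]

def hsAdjoint (Φ : Matrix n n ℂ →ₗ[ℂ] Matrix m m ℂ) : Matrix m m ℂ →ₗ[ℂ] Matrix n n ℂ where
  toFun A := of fun i j => ((Φ (single i j 1))ᴴ * A).trace
  map_add' A B := by ext; simp [Matrix.mul_add]
  map_smul' c A := by ext; simp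

@[simp]
lemma hsAdjoint_apply (Φ : Matrix n n ℂ →ₗ[ℂ] Matrix m m ℂ) (A : Matrix m m ℂ) (i j : n) :
    hsAdjoint Φ A i j = ((Φ (single i j 1))ᴴ * A).trace :=
  rfl

lemma adjMap_eq_hsAdjoint {d : ℕ} (Φ : Mat d →ₗ[ℂ] Mat d) (A : Mat d) :
    adjMap Φ A = hsAdjoint Φ A :=
  rfl

lemma hsAdjoint_one [Fintype n] [DecidableEq m] {Φ : Matrix n n ℂ →ₗ[ℂ] Matrix m m ℂ}
    (hΦ : ∀ X, (Φ X).trace = X.trace) : hsAdjoint Φ 1 = 1 := by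
  ext i j
  rw [hsAdjoint_apply, Matrix.mul_one, trace_conjTranspose, hΦ, one_apply]
  by_cases hij : i = j
  · simp [hij, trace_single_eq_same]
  · simp [hij, trace_single_eq_of_ne _ _ _ hij]

lemma hsAdjoint_vecMulVec [Fintype n] {Φ : Matrix n n ℂ →ₗ[ℂ] Matrix m m ℂ}
    (hΦ : (choiMat' Φ).IsHermitian) (w : m → ℂ) :
    hsAdjoint Φ (vecMulVec w (star w)) =
      ((of fun (p : n × m) i => if p.1 = i then w p.2 else 0)ᴴ * choiMat' Φ *
        of fun (p : n × m) i => if p.1 = i then w p.2 else 0)ᵀ := by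
  ext i j
  have hconj : ∀ p q, star (Φ (single i j 1) q p) = Φ (single j i 1) p q :=
    fun p q => hΦ.apply (j, p) (i, q)
  simp only [hsAdjoint_apply, trace, diag_apply, Matrix.mul_apply, conjTranspose_apply, hconj,
    vecMulVec_apply, Pi.star_apply, RCLike.star_def, choiMat', transpose_apply, of_apply,
    apply_ite (starRingEnd ℂ), map_zero, ite_mul, zero_mul, Fintype.sum_prod_type,
    Finset.sum_ite_irrel, Finset.sum_const_zero, Finset.sum_ite_eq', Finset.mem_univ, ↓reduceIte,
    mul_ite, Finset.sum_mul, mul_zero]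
  rw [Finset.sum_comm]
  exact Finset.sum_congr rfl fun p _ => Finset.sum_congr rfl fun q _ => by ring

lemma posSemidef_hsAdjoint [Fintype n] {Φ : Matrix n n ℂ →ₗ[ℂ] Matrix m m ℂ}
    (hΦ : (choiMat' Φ).PosSemidef) {A : Matrix m m ℂ} (hA : A.PosSemidef) :
    (hsAdjoint Φ A).PosSemidef := by
  obtain ⟨r, w, rfl⟩ := posSemidef_iff_eq_sum_vecMulVec.mp hA
  rw [map_sum]
  refine posSemidef_sum _ fun k _ => ?_
  rw [hsAdjoint_vecMulVec hΦ.isHermitian]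
  exact (hΦ.conjTranspose_mul_mul_same _).transpose

end HilbertSchmidtAdjoint

section ProductBasis

variable {ι κ : Type*} [Fintype ι]

def piKronecker (Q : ι → Matrix κ κ ℂ) : Matrix (ι → κ) (ι → κ) ℂ :=
  of fun p q => ∏ t, Q t (p t) (q t)

@[simp]
lemma piKronecker_apply (Q : ι → Matrix κ κ ℂ) (p q : ι → κ) :
    piKronecker Q p q = ∏ t, Q t (p t) (q t) :=
  rfl

lemma piKronecker_one [DecidableEq κ] : piKronecker (fun _ : ι => (1 : Matrix κ κ ℂ)) = 1 := by
  ext p q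
  simp [one_apply, Finset.prod_boole, funext_iff]

def prodVec (e : ι → κ → κ → ℂ) (g : ι → κ) : (ι → κ) → ℂ :=
  fun f => ∏ t, e t (g t) (f t)

lemma sum_piFinset_vecMulVec_prodVec [DecidableEq ι] [Fintype κ] (e : ι → κ → κ → ℂ)
    (S : ι → Finset κ) :
    ∑ g ∈ Fintype.piFinset S, vecMulVec (prodVec e g) (star (prodVec e g)) =
      piKronecker fun t => ∑ j ∈ S t, vecMulVec (e t j) (star (e t j)) := by
  ext p q
  simp only [Matrix.sum_apply, vecMulVec_apply, prodVec, Pi.star_apply, star_prod,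
    ← Finset.prod_mul_distrib, piKronecker_apply, Finset.prod_univ_sum]

lemma filter_apply_eq_eq_piFinset_update [DecidableEq ι] [DecidableEq κ] [Fintype κ]
    (s : ι) (i : κ) :
    Finset.univ.filter (fun g : ι → κ => g s = i) =
      Fintype.piFinset (Function.update (fun _ => (Finset.univ : Finset κ)) s {i}) := by
  ext g
  simp only [Finset.mem_filter, Finset.mem_univ, true_and, Fintype.mem_piFinset]
  refine ⟨fun h t => ?_, fun h => by simpa using h s⟩
  by_cases ht : t = s
  · subst ht; simp [h]
  · simp [ht]

lemma outer_eq_vecMulVec {d : ℕ} (v : Fin d → ℂ) : outer v = vecMulVec v (star v) :=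
  rfl

lemma sum_vecMulVec_eq_one {d : ℕ} {e : Fin d → Fin d → ℂ} (he : OrthonormalBasis' e) :
    ∑ j, vecMulVec (e j) (star (e j)) = 1 := by
  set U : Mat d := of e
  have hU : U * Uᴴ = 1 := by
    ext i j
    simpa [U, Matrix.mul_apply, one_apply, mul_comm, eq_comm] using he j i
  calc ∑ j, vecMulVec (e j) (star (e j)) = (Uᴴ * U)ᵀ := by
        ext a b
        simp [U, Matrix.mul_apply, Matrix.sum_apply, vecMulVec_apply, mul_comm]
    _ = 1 := by rw [mul_eq_one_comm.mp hU, transpose_one]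

end ProductBasis

section Marginal

variable {N d : ℕ}

lemma insertAt_eq_piSplitAt_symm (s : Fin N) (a : Fin d) (h : {t : Fin N // t ≠ s} → Fin d) :
    insertAt s a h = (Equiv.piSplitAt s fun _ => Fin d).symm (a, h) := by
  ext t
  by_cases ht : t = s
  · subst ht; simp [insertAt, Equiv.piSplitAt]
  · simp [insertAt, Equiv.piSplitAt, ht]

lemma sum_eq_sum_sum_insertAt {M : Type*} [AddCommMonoid M] (s : Fin N)
    (f : (Fin N → Fin d) → M) :
    ∑ p, f p = ∑ a, ∑ h : {t : Fin N // t ≠ s} → Fin d, f (insertAt s a h) := by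
  rw [← (Equiv.piSplitAt s fun _ => Fin d).symm.sum_comp, Fintype.sum_prod_type]
  simp only [insertAt_eq_piSplitAt_symm]

lemma piKronecker_update_one_apply_insertAt (s : Fin N) (P : Mat d) (a b : Fin d)
    (h h' : {t : Fin N // t ≠ s} → Fin d) :
    piKronecker (Function.update (fun _ => (1 : Mat d)) s P) (insertAt s a h) (insertAt s b h') =
      if h = h' then P a b else 0 := by
  have hrest : ∀ t : {t : Fin N // t ≠ s}, Function.update (fun _ => (1 : Mat d)) s P t
      (insertAt s a h t) (insertAt s b h' t) = (1 : Mat d) (h t) (h' t) := fun t => by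
    simp [insertAt, t.2]
  rw [piKronecker_apply, Fintype.prod_eq_mul_prod_subtype_ne _ s]
  simp only [hrest, one_apply, Finset.prod_boole]
  simp [insertAt, funext_iff]

lemma trace_conjTranspose_mul_piKronecker_update (s : Fin N)
    (M : Matrix (Fin N → Fin d) (Fin N → Fin d) ℂ) (P : Mat d) :
    (Mᴴ * piKronecker (Function.update (fun _ => (1 : Mat d)) s P)).trace =
      ((marginal s M)ᴴ * P).trace := by
  simp only [trace, diag_apply, Matrix.mul_apply, conjTranspose_apply, marginal, of_apply,
    star_sum, Finset.sum_mul]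
  simp only [sum_eq_sum_sum_insertAt s, piKronecker_update_one_apply_insertAt,
    mul_ite, mul_zero, Finset.sum_ite_eq', Finset.mem_univ, if_true]
  exact Finset.sum_congr rfl fun a _ => Finset.sum_comm

lemma hsAdjoint_piKronecker_update {s : Fin N}
    {Λ : Mat d →ₗ[ℂ] Matrix (Fin N → Fin d) (Fin N → Fin d) ℂ} {Ψ : Mat d →ₗ[ℂ] Mat d}
    (hΛ : ∀ X, marginal s (Λ X) = Ψ X) (P : Mat d) :
    hsAdjoint Λ (piKronecker (Function.update (fun _ => (1 : Mat d)) s P)) = hsAdjoint Ψ P := by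
  ext i j
  rw [hsAdjoint_apply, hsAdjoint_apply, trace_conjTranspose_mul_piKronecker_update, hΛ]

end Marginal

theorem compatible_channels_give_compatible_POVMs_general {N d : ℕ}
    (Φ : Fin N → (Mat d →ₗ[ℂ] Mat d))
    (hcomp : Compatible Φ)
    (e : Fin N → Fin d → Fin d → ℂ) (he : ∀ s, OrthonormalBasis' (e s)) :
    ∃ B : (Fin N → Fin d) → Mat d,
      (∀ g, (B g).PosSemidef) ∧ (∑ g, B g) = 1 ∧
      ∀ (s : Fin N) (i : Fin d),
        (∑ g ∈ Finset.univ.filter fun g : Fin N → Fin d => g s = i, B g)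
          = adjMap (Φ s) (outer (e s i)) := by
  obtain ⟨Λ, ⟨hΛ_cp, hΛ_tp⟩, hΛ_marg⟩ := hcomp
  refine ⟨fun g => hsAdjoint Λ (vecMulVec (prodVec e g) (star (prodVec e g))),
    fun g => posSemidef_hsAdjoint hΛ_cp (posSemidef_vecMulVec_self_star _), ?_, fun s i => ?_⟩
  · rw [← map_sum, ← Fintype.piFinset_univ, sum_piFinset_vecMulVec_prodVec,
      funext fun t => sum_vecMulVec_eq_one (he t), piKronecker_one, hsAdjoint_one hΛ_tp]
  · have hfactors : (fun t => ∑ j ∈ Function.update (fun _ => Finset.univ) s {i} t,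
        vecMulVec (e t j) (star (e t j))) = Function.update (fun _ => 1) s (outer (e s i)) := by
      ext1 t
      by_cases ht : t = s
      · subst ht
        simp [outer_eq_vecMulVec]
      · simp [ht, sum_vecMulVec_eq_one (he t)]
    rw [← map_sum, filter_apply_eq_eq_piFinset_update, sum_piFinset_vecMulVec_prodVec, hfactors,
      hsAdjoint_piKronecker_update (hΛ_marg s), adjMap_eq_hsAdjoint]

theorem compatible_channels_give_compatible_POVMs {N d : ℕ}
    (Φ : Fin N → (Mat d →ₗ[ℂ] Mat d)) (hΦ : ∀ s, IsCPTP' (Φ s))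
    (hcomp : Compatible Φ)
    (e : Fin N → Fin d → Fin d → ℂ) (he : ∀ s, OrthonormalBasis' (e s)) :
    ∃ B : (Fin N → Fin d) → Mat d,
      (∀ g, (B g).PosSemidef) ∧ (∑ g, B g) = 1 ∧
      ∀ (s : Fin N) (i : Fin d),
        (∑ g ∈ Finset.univ.filter fun g : Fin N → Fin d => g s = i, B g)
          = adjMap (Φ s) (outer (e s i)) :=
  compatible_channels_give_compatible_POVMs_general Φ hcomp e he
end
end

section
/- Let B, C be d × d positive semidefinite matrices with unit diagonal, and let e be the canonical basis and f an orthonormal basis unbiased with respect to the canonical basis. Then (G_{Σ_B, can} − ω) and (G_{Σ_C, f} − ω) are orthogonal in the Hilbert-Schmidt inner product, where G_{Σ_B, can} = |conj(B)⟩⟨conj(B)| ∘ Z_can and G_{Σ_C, f} = |conj(C)⟩⟨conj(C)| ∘ Z_f (∘ denoting the entrywise/Hadamard product). -/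
open Matrix BigOperators ComplexOrder

noncomputable section

/-- Rank-one projector `|v⟩⟨v|` for a vector on the doubled index set. -/
def outerP {d : ℕ} (v : Fin d × Fin d → ℂ) :
    Matrix (Fin d × Fin d) (Fin d × Fin d) ℂ :=
  Matrix.of fun p q => v p * star (v q)

/-- Vectorization of the entrywise conjugate of a matrix. -/
def vecConj {d : ℕ} (B : Matrix (Fin d) (Fin d) ℂ) : Fin d × Fin d → ℂ :=
  fun p => star (B p.1 p.2)

/-- The canonical basis of `ℂ^d`. -/
def canBasis (d : ℕ) : Fin d → Fin d → ℂ := fun i k => if k = i then 1 else 0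

/-- The "G" matrix of the Schur channel `Σ_B` in the basis `e`. -/
def GSchur {d : ℕ} (B : Matrix (Fin d) (Fin d) ℂ) (e : Fin d → Fin d → ℂ) :
    Matrix (Fin d × Fin d) (Fin d × Fin d) ℂ :=
  Matrix.hadamard (outerP (vecConj B)) (ZMat e)

/-!
`G_{Σ_B,can} - ω` is supported on the entries `(ii, jj)`, because `Z_can` is. On exactly these
entries `G_{Σ_C,f} - ω` vanishes: the unit diagonal of `C` gives `|conj C⟩⟨conj C| = 1` there,
and unbiasedness gives `Z_f = ∑ₖ |f_k(i)|² |f_k(j)|² = 1/d = ω`. So the Hilbert–Schmidt inner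
product is a sum of zeros.
-/

theorem Matrix.trace_conjTranspose_mul_eq_zero_of_forall_eq_zero_or_eq_zero
    {n R : Type*} [Fintype n] [NonUnitalNonAssocSemiring R] [StarAddMonoid R]
    {A B : Matrix n n R} (h : ∀ i j, A i j = 0 ∨ B i j = 0) : (Aᴴ * B).trace = 0 := by
  simp only [trace, diag_apply, mul_apply]
  refine Finset.sum_eq_zero fun i _ => Finset.sum_eq_zero fun j _ => ?_
  rcases h j i with hA | hB
  · rw [conjTranspose_apply, hA, star_zero, zero_mul]
  · rw [hB, mul_zero]

section Diagonal

variable {d : ℕ} {p q : Fin d × Fin d}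

theorem ZMat_canBasis_apply_eq_zero (h : ¬ (p.1 = p.2 ∧ q.1 = q.2)) :
    ZMat (canBasis d) p q = 0 := by
  simp only [ZMat, of_apply]
  refine Finset.sum_eq_zero fun i _ => ?_
  simp only [canBasis]
  split_ifs <;> simp_all

theorem omegaMat_apply_eq_zero (h : ¬ (p.1 = p.2 ∧ q.1 = q.2)) : omegaMat d p q = 0 := by
  simp only [omegaMat, of_apply]
  split_ifs <;> simp_all

theorem GSchur_canBasis_sub_omegaMat_apply_eq_zero (B : Matrix (Fin d) (Fin d) ℂ)
    (h : ¬ (p.1 = p.2 ∧ q.1 = q.2)) : (GSchur B (canBasis d) - omegaMat d) p q = 0 := by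
  simp [GSchur, ZMat_canBasis_apply_eq_zero h, omegaMat_apply_eq_zero h]

theorem omegaMat_apply_diag (i j : Fin d) : omegaMat d (i, i) (j, j) = 1 / d := by
  simp [omegaMat]

theorem outerP_vecConj_apply_diag {C : Matrix (Fin d) (Fin d) ℂ} (hC : ∀ i, C i i = 1)
    (i j : Fin d) : outerP (vecConj C) (i, i) (j, j) = 1 := by
  simp [outerP, vecConj, hC]

theorem ZMat_apply_diag (e : Fin d → Fin d → ℂ) (i j : Fin d) :
    ZMat e (i, i) (j, j) = ∑ k, (‖e k i‖ ^ 2 * ‖e k j‖ ^ 2 : ℝ) := by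
  simp only [ZMat, of_apply, star_mul', Complex.star_def, Complex.norm_conj, Complex.mul_conj',
    Complex.ofReal_sum, Complex.ofReal_mul, Complex.ofReal_pow]

theorem ZMat_apply_diag_of_unbiased {f : Fin d → Fin d → ℂ}
    (hf : ∀ j s, ‖f j s‖ = 1 / Real.sqrt d) (i j : Fin d) :
    ZMat f (i, i) (j, j) = 1 / d := by
  have hd : (d : ℝ) ≠ 0 := Nat.cast_ne_zero.mpr (Fin.pos i).ne'
  have hsq : (1 / Real.sqrt d) ^ 2 = 1 / d := by
    rw [div_pow, one_pow, Real.sq_sqrt (Nat.cast_nonneg d)]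
  rw [ZMat_apply_diag]
  simp only [hf, hsq, Finset.sum_const, Finset.card_univ, Fintype.card_fin, nsmul_eq_mul]
  push_cast
  field_simp

theorem GSchur_sub_omegaMat_apply_diag {C : Matrix (Fin d) (Fin d) ℂ} (hC : ∀ i, C i i = 1)
    {f : Fin d → Fin d → ℂ} (hf : ∀ j s, ‖f j s‖ = 1 / Real.sqrt d) (i j : Fin d) :
    (GSchur C f - omegaMat d) (i, i) (j, j) = 0 := by
  rw [Matrix.sub_apply, GSchur, hadamard_apply, outerP_vecConj_apply_diag hC,
    ZMat_apply_diag_of_unbiased hf, omegaMat_apply_diag, one_mul, sub_self]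

end Diagonal

theorem Schur_G_orthogonal_general {d : ℕ}
    (B C : Matrix (Fin d) (Fin d) ℂ)
    (hCdiag : ∀ i, C i i = 1)
    (f : Fin d → Fin d → ℂ)
    (hunb : ∀ j s, ‖f j s‖ = 1 / Real.sqrt d) :
    (((GSchur B (canBasis d) - omegaMat d))ᴴ * (GSchur C f - omegaMat d)).trace = 0 := by
  refine trace_conjTranspose_mul_eq_zero_of_forall_eq_zero_or_eq_zero fun p q => ?_
  rcases p with ⟨i, i'⟩
  rcases q with ⟨j, j'⟩
  by_cases h : i = i' ∧ j = j'
  · obtain ⟨rfl, rfl⟩ := h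
    exact .inr (GSchur_sub_omegaMat_apply_diag hCdiag hunb i j)
  · exact .inl (GSchur_canBasis_sub_omegaMat_apply_eq_zero B h)

theorem Schur_G_orthogonal {d : ℕ} (hd : 0 < d)
    (B C : Matrix (Fin d) (Fin d) ℂ)
    (hB : B.PosSemidef) (hBdiag : ∀ i, B i i = 1)
    (hC : C.PosSemidef) (hCdiag : ∀ i, C i i = 1)
    (f : Fin d → Fin d → ℂ) (hf : OrthonormalBasis' f)
    (hunb : ∀ j s, ‖f j s‖ = 1 / Real.sqrt d) :
    (((GSchur B (canBasis d) - omegaMat d))ᴴ * (GSchur C f - omegaMat d)).trace = 0 :=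
  Schur_G_orthogonal_general B C hCdiag f hunb
end
end

section
/- If Hermitian matrices X_1, ..., X_N are positive semidefinite with mutually orthogonal supports (X_i X_j = 0 for i ≠ j), then any Hermitian H with H ≥ 0 and H ≥ X_i for all i satisfies Tr H ≥ Σ_i Tr X_i. -/
open Matrix BigOperators ComplexOrder

noncomputable section

lemma my_trace_re_nonneg {n : Type*} [Fintype n] [DecidableEq n]
    {M : Matrix n n ℂ} (hM : M.PosSemidef) : 0 ≤ M.trace.re := by
  rw [Matrix.trace, Complex.re_sum]
  refine Finset.sum_nonneg fun i _ => ?_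
  have := hM.re_dotProduct_nonneg (Pi.single i 1)
  simpa [dotProduct, mulVec, Pi.single_apply, Finset.mul_sum, diag] using this

lemma my_sandwich {n : Type*} [Fintype n] [DecidableEq n]
    {U : Matrix n n ℂ} (hU : star U * U = 1) (f g : n → ℂ) :
    (U * diagonal f * star U) * (U * diagonal g * star U)
      = U * diagonal (fun k => f k * g k) * star U := by
  have h : star U * (U * (diagonal g * star U)) = diagonal g * star U := by
    rw [← mul_assoc, hU, one_mul]
  simp only [mul_assoc, h, ← diagonal_mul_diagonal]

lemma my_exists_proj {n : Type*} [Fintype n] [DecidableEq n]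
    {A : Matrix n n ℂ} (hA : A.PosSemidef) :
    ∃ P : Matrix n n ℂ, Pᴴ = P ∧ P * P = P ∧ P * A = A ∧ A * P = A ∧
      ∃ M, P = A * M := by
  have hAh := hA.isHermitian
  set U : Matrix n n ℂ := (Matrix.IsHermitian.eigenvectorUnitary hAh : Matrix n n ℂ) with hUdef
  have hU : star U * U = 1 := by simp [hUdef]
  set ev : n → ℝ := hAh.eigenvalues with hev
  have hspec : A = U * diagonal (RCLike.ofReal ∘ ev) * star U := hAh.spectral_theorem
  refine ⟨U * diagonal (fun k => if ev k = 0 then (0:ℂ) else 1) * star U, ?_, ?_, ?_, ?_,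
    ⟨U * diagonal (fun k => if ev k = 0 then (0:ℂ) else ((ev k : ℂ))⁻¹) * star U, ?_⟩⟩
  · simp only [conjTranspose_mul, conjTranspose_conjTranspose, diagonal_conjTranspose,
      star_eq_conjTranspose]
    rw [mul_assoc]
    congr 2
    refine congrArg diagonal (funext fun k => ?_)
    by_cases h : ev k = 0 <;> simp [h, Pi.star_apply]
  · rw [my_sandwich hU]
    congr 2
    refine congrArg diagonal (funext fun k => ?_)
    by_cases h : ev k = 0 <;> simp [h]
  · conv_lhs => rw [hspec]
    rw [my_sandwich hU]
    rw [hspec]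
    congr 2
    refine congrArg diagonal (funext fun k => ?_)
    by_cases h : ev k = 0 <;> simp [h, Function.comp]
  · conv_lhs => rw [hspec]
    rw [my_sandwich hU]
    rw [hspec]
    congr 2
    refine congrArg diagonal (funext fun k => ?_)
    by_cases h : ev k = 0 <;> simp [h, Function.comp]
  · conv_rhs => rw [hspec]
    rw [my_sandwich hU]
    congr 2
    refine congrArg diagonal (funext fun k => ?_)
    by_cases h : ev k = 0
    · simp [h, Function.comp]
    · have : ((ev k : ℂ)) ≠ 0 := by exact_mod_cast Complex.ofReal_ne_zero.mpr h
      simp [h, Function.comp]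

theorem trace_ge_sum_of_orthogonal_supports {n : Type*} [Fintype n] [DecidableEq n]
    {N : ℕ} (X : Fin N → Matrix n n ℂ) (hX : ∀ i, (X i).PosSemidef)
    (horth : ∀ i j, i ≠ j → X i * X j = 0)
    (H : Matrix n n ℂ) (hH : H.PosSemidef)
    (hge : ∀ i, (H - X i).PosSemidef) :
    (∑ i, ((X i).trace).re) ≤ (H.trace).re := by
  choose P hPherm hPidem hPA hAP hPM using fun i => my_exists_proj (hX i)
  have hPP : ∀ i j, i ≠ j → P i * P j = 0 := by
    intro i j hij
    obtain ⟨Mi, hMi⟩ := hPM i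
    obtain ⟨Mj, hMj⟩ := hPM j
    calc P i * P j = (P i)ᴴ * P j := by rw [hPherm]
      _ = (X i * Mi)ᴴ * (X j * Mj) := by rw [← hMi, ← hMj]
      _ = Miᴴ * ((X i)ᴴ * (X j * Mj)) := by rw [conjTranspose_mul, mul_assoc]
      _ = Miᴴ * ((X i)ᴴ * X j * Mj) := by rw [mul_assoc ((X i)ᴴ)]
      _ = Miᴴ * (X i * X j * Mj) := by rw [(hX i).isHermitian.eq]
      _ = 0 := by rw [horth i j hij, zero_mul, mul_zero]
  set Q := ∑ i, P i with hQ
  have hQherm : Qᴴ = Q := by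
    rw [hQ, conjTranspose_sum]
    exact Finset.sum_congr rfl fun i _ => hPherm i
  have hQQ : Q * Q = Q := by
    rw [hQ, Finset.sum_mul_sum]
    refine Finset.sum_congr rfl fun i _ => ?_
    rw [Finset.sum_eq_single i (fun j _ hji => hPP i j (Ne.symm hji))
      (fun h => absurd (Finset.mem_univ i) h), hPidem]
  have step1 : ∀ i, (X i).trace.re ≤ (P i * H).trace.re := by
    intro i
    have h0 : 0 ≤ ((P i)ᴴ * (H - X i) * P i).trace.re :=
      my_trace_re_nonneg ((hge i).conjTranspose_mul_mul_same _)
    have hexp : (P i)ᴴ * (H - X i) * P i = P i * H * P i - X i := by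
      rw [hPherm, mul_sub, sub_mul]
      congr 1
      rw [hPA, hAP]
    have h2 : (P i * H * P i).trace = (P i * H).trace := by
      rw [trace_mul_cycle (P i) H (P i), hPidem]
    rw [hexp, trace_sub, Complex.sub_re, h2] at h0
    linarith
  have step3 : ∑ i, (P i * H).trace = (Q * H * Q).trace := by
    rw [trace_mul_cycle Q H Q, hQQ, hQ, Finset.sum_mul, trace_sum]
  have step5 : (Q * H * Q).trace.re ≤ H.trace.re := by
    have hpsd := hH.conjTranspose_mul_mul_same (1 - Q)
    have hexp : (1 - Q)ᴴ * H * (1 - Q) = H - Q * H - H * Q + Q * H * Q := by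
      rw [conjTranspose_sub, conjTranspose_one, hQherm]
      noncomm_ring
    have e1 : (Q * H).trace = (Q * H * Q).trace := by
      rw [trace_mul_cycle Q H Q, hQQ]
    have e2 : (H * Q).trace = (Q * H).trace := trace_mul_comm H Q
    have htr : ((1 - Q)ᴴ * H * (1 - Q)).trace = H.trace - (Q * H * Q).trace := by
      rw [hexp, trace_add, trace_sub, trace_sub, e2, e1]
      ring
    have h0 := my_trace_re_nonneg hpsd
    rw [htr, Complex.sub_re] at h0
    linarith
  calc ∑ i, ((X i).trace).re ≤ ∑ i, (P i * H).trace.re :=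
        Finset.sum_le_sum fun i _ => step1 i
    _ = (∑ i, (P i * H).trace).re := (Complex.re_sum _ _).symm
    _ = (Q * H * Q).trace.re := by rw [step3]
    _ ≤ H.trace.re := step5
end
end
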